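/- Let C = C_{b,D} be an integer Cantor set with 0 ∈ D and increasing enumeration (k_n). Then for every integer q ≥ 1, the limit lim_{N→∞} (1/N) |{n ≤ N : q divides k_n}| exists and is strictly positive. -/

import Mathlib

/-!
Write `s = #D`. Splitting off the last base-`b` digit gives `k (s m + j) = b k_m + k_j` for
`j < s`, hence `k (s^L m + c) = b^L k_m + k_c` for `c < s^L`. Choose `L ≥ 1` with `e = b^L`
idempotent modulo `q`; then, with `S = s^L`, the residues `f n = k_n mod q` satisfy
`f (S^M m + r) = e f_m + f_r` for `r < S^M` and `M ≥ 1`.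

The values `e f_m` are closed under addition, hence form a subgroup `E` of `ℤ/q`. As `M` grows,
the proportion of `r < S^M` with `f r = t` evolves by averaging over the translates `t - e f_c`,
`c < S`. Once `S` is enlarged so that every element of `E` is some `e f_c` with `c < S`, each
averaging step shrinks the oscillation on `E` by the factor `1 - 1/S` and preserves the mean, so
these proportions converge on `E` to their mean, which is positive since `f 0 = 0`. Cutting
`[0, N)` into blocks of length `S^M` then gives the density.
-/

open Filter Topology Finset

theorem exists_ne_zero_isIdempotentElem_pow {M : Type*} [Monoid M] [Finite M] (x : M) :
    ∃ n ≠ 0, IsIdempotentElem (x ^ n) := by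
  obtain ⟨i, j, hne, hij⟩ := Finite.exists_ne_map_eq_of_infinite (fun n : ℕ => x ^ n)
  wlog hlt : i < j generalizing i j
  · exact this j i hne.symm hij.symm (by omega)
  set p := j - i
  have hperiod : ∀ t, i ≤ t → x ^ (t + p) = x ^ t := fun t ht => by
    rw [show t + p = (t - i) + j by omega, pow_add, ← hij, ← pow_add, Nat.sub_add_cancel ht]
  have hperiodic : ∀ a t, i ≤ t → x ^ (t + a * p) = x ^ t := by
    intro a t ht
    induction a with
    | zero => simp
    | succ a ih => rw [add_one_mul, ← add_assoc, hperiod _ (by omega), ih]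
  have hp : 1 ≤ p := by omega
  refine ⟨(i + 1) * p, mul_ne_zero (by omega) (by omega), ?_⟩
  rw [IsIdempotentElem, ← pow_add]
  exact hperiodic _ _ (by nlinarith)

theorem Finset.sum_range_mul_eq_sum_sum {M : Type*} [AddCommMonoid M] (a K : ℕ) (g : ℕ → M) :
    ∑ n ∈ range (a * K), g n = ∑ m ∈ range a, ∑ r ∈ range K, g (K * m + r) := by
  induction a with
  | zero => simp
  | succ a ih => rw [add_one_mul, sum_range_add, ih, sum_range_succ, mul_comm a K]

theorem apply_pow_mul_add_of_apply_mul_add {R : Type*} [Semiring R] {f : ℕ → R} {a : R}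
    {s : ℕ} (hf0 : f 0 = 0) (hf : ∀ m, ∀ j < s, f (s * m + j) = a * f m + f j) (L : ℕ) :
    ∀ m, ∀ c < s ^ L, f (s ^ L * m + c) = a ^ L * f m + f c := by
  induction L with
  | zero =>
    intro m c hc
    obtain rfl : c = 0 := by simpa using hc
    simp [hf0]
  | succ L ih =>
    intro m c hc
    have hs : 0 < s := Nat.pos_of_ne_zero (by rintro rfl; simp at hc)
    have hcs : c / s < s ^ L := Nat.div_lt_of_lt_mul (by rwa [← pow_succ'])
    calc f (s ^ (L + 1) * m + c) = f (s * (s ^ L * m + c / s) + c % s) := by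
          rw [pow_succ', mul_add, add_assoc, Nat.div_add_mod, mul_assoc]
      _ = a ^ (L + 1) * f m + (a * f (c / s) + f (c % s)) := by
          rw [hf _ _ (Nat.mod_lt _ hs), ih _ _ hcs, mul_add, ← mul_assoc, ← pow_succ',
            add_assoc]
      _ = a ^ (L + 1) * f m + f c := by rw [← hf _ _ (Nat.mod_lt _ hs), Nat.div_add_mod]

theorem exists_lt_pow_apply_eq {α : Type*} [Finite α] (g : ℕ → α) {S : ℕ} (hS : 1 < S) :
    ∃ J ≠ 0, ∀ m, ∃ c < S ^ J, g c = g m := by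
  obtain ⟨B, hB⟩ := (Set.finite_range (Function.invFun g)).bddAbove
  refine ⟨B + 1, B.succ_ne_zero, fun m =>
    ⟨Function.invFun g (g m), ?_, Function.invFun_eq ⟨m, rfl⟩⟩⟩
  exact (hB ⟨g m, rfl⟩).trans_lt ((Nat.lt_succ_self B).trans (Nat.lt_pow_self hS))

theorem abs_sub_mul_le_of_monotone {u : ℕ → ℝ} (hu : Monotone u) {K : ℕ} (hK : K ≠ 0)
    {l δ : ℝ} (hδ : 0 ≤ δ) (hblock : ∀ m : ℕ, |u (m * K) - l * (m * K)| ≤ δ * (m * K))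
    (N : ℕ) :
    |u N - l * N| ≤ δ * N + (δ + |l|) * K := by
  set m := N / K
  have hN_lo : m * K ≤ N := Nat.div_mul_le_self N K
  have hN_hi : N ≤ (m + 1) * K := by
    rw [add_one_mul]; exact (Nat.lt_div_mul_add (Nat.pos_of_ne_zero hK)).le
  have hlo : (m : ℝ) * K ≤ N := by exact_mod_cast hN_lo
  have hhi : (N : ℝ) ≤ (m + 1) * K := by exact_mod_cast hN_hi
  have hl : ∀ x : ℝ, |x| ≤ K → |l * x| ≤ |l| * K := fun x hx => by
    rw [abs_mul]; exact mul_le_mul_of_nonneg_left hx (abs_nonneg l)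
  have h_lo := (abs_le.1 (hblock m)).1
  have h_hi := (abs_le.1 (hblock (m + 1))).2
  push_cast at h_hi
  have hl_lo := (abs_le.1 (hl (m * K - N) (abs_le.2 ⟨by linarith, by linarith⟩))).1
  have hl_hi := (abs_le.1 (hl ((m + 1) * K - N) (abs_le.2 ⟨by linarith, by linarith⟩))).2
  rw [abs_le]
  constructor <;> nlinarith [hu hN_lo, hu hN_hi]

theorem tendsto_div_of_abs_sub_mul_le {u : ℕ → ℝ} (hu : Monotone u) {l : ℝ}
    (h : ∀ ε > 0, ∃ K ≠ 0, ∀ m : ℕ, |u (m * K) - l * (m * K)| ≤ ε * (m * K)) :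
    Tendsto (fun N : ℕ => u N / N) atTop (𝓝 l) := by
  rw [Metric.tendsto_atTop]
  intro ε hε
  obtain ⟨K, hK, hblock⟩ := h (ε / 2) (half_pos hε)
  obtain ⟨N₀, hN₀⟩ := exists_nat_gt (2 * (ε / 2 + |l|) * K / ε)
  refine ⟨N₀ + 1, fun N hN => ?_⟩
  have hNpos : (0 : ℝ) < N := by exact_mod_cast (show 0 < N by omega)
  have hNgt : (N₀ : ℝ) < N := by exact_mod_cast (show N₀ < N by omega)
  have hsmall : (ε / 2 + |l|) * K < ε / 2 * N := by
    rw [div_lt_iff₀ hε] at hN₀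
    linarith [mul_lt_mul_of_pos_right hNgt hε]
  rw [Real.dist_eq, show u N / N - l = (u N - l * N) / N by field_simp, abs_div,
    abs_of_pos hNpos, div_lt_iff₀ hNpos]
  linarith [abs_sub_mul_le_of_monotone hu hK (half_pos hε).le hblock N]

theorem Finset.sum_comp_sub_eq_sum {G M : Type*} [AddGroup G] [AddCommMonoid M] {T : Finset G}
    {g : G} (hT : ∀ t ∈ T, t - g ∈ T) (F : G → M) :
    ∑ t ∈ T, F (t - g) = ∑ t ∈ T, F t := by
  classical
  have himage : T.image (· - g) = T :=
    eq_of_subset_of_card_le (image_subset_iff.2 hT)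
      (card_image_of_injective _ sub_left_injective).ge
  rw [← sum_image (f := F) sub_left_injective.injOn, himage]

section Averaging

variable {G : Type*} [AddGroup G] {T : Finset G} {N : ℕ} {w : ℕ → G} {P : ℕ → G → ℝ}

theorem sum_succ_eq_sum_of_average (hN : N ≠ 0) (hclosed : ∀ t ∈ T, ∀ c < N, t - w c ∈ T)
    (hP : ∀ i t, P (i + 1) t = (∑ c ∈ range N, P i (t - w c)) / N) (i : ℕ) :
    ∑ t ∈ T, P (i + 1) t = ∑ t ∈ T, P i t := by
  simp_rw [hP, ← sum_div]
  rw [sum_comm, sum_congr rfl fun c hc => sum_comp_sub_eq_sum (hclosed · · c (mem_range.1 hc)) _,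
    sum_const, card_range, nsmul_eq_mul, mul_div_cancel_left₀ _ (Nat.cast_ne_zero.2 hN)]

theorem sup'_succ_le_of_average (hT : T.Nonempty) (hN : 0 < N)
    (hclosed : ∀ t ∈ T, ∀ c < N, t - w c ∈ T)
    (hP : ∀ i t, P (i + 1) t = (∑ c ∈ range N, P i (t - w c)) / N) (i : ℕ) :
    T.sup' hT (P (i + 1)) ≤ T.sup' hT (P i) := by
  refine sup'_le hT _ fun t ht => ?_
  rw [hP, div_le_iff₀ (by exact_mod_cast hN)]
  calc ∑ c ∈ range N, P i (t - w c) ≤ #(range N) • T.sup' hT (P i) :=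
        sum_le_card_nsmul _ _ _ fun c hc => le_sup' (P i) (hclosed t ht c (mem_range.1 hc))
    _ = _ := by rw [card_range, nsmul_eq_mul, mul_comm]

theorem le_inf'_succ_of_average (hT : T.Nonempty) (hclosed : ∀ t ∈ T, ∀ c < N, t - w c ∈ T)
    (hreach : ∀ t ∈ T, ∀ u ∈ T, ∃ c < N, t - w c = u)
    (hP : ∀ i t, P (i + 1) t = (∑ c ∈ range N, P i (t - w c)) / N) (i : ℕ) :
    T.inf' hT (P i) + (T.sup' hT (P i) - T.inf' hT (P i)) / N ≤ T.inf' hT (P (i + 1)) := by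
  refine le_inf' hT _ fun t ht => ?_
  obtain ⟨u, hu, hmax⟩ := exists_mem_eq_sup' hT (P i)
  obtain ⟨c₀, hc₀, rfl⟩ := hreach t ht u hu
  have hN : (0 : ℝ) < N := by exact_mod_cast (show 0 < N by omega)
  have hrest :
      ((N : ℝ) - 1) * T.inf' hT (P i) ≤ ∑ c ∈ (range N).erase c₀, P i (t - w c) := by
    have := card_nsmul_le_sum ((range N).erase c₀) (fun c => P i (t - w c)) (T.inf' hT (P i))
      fun c hc => inf'_le (P i) (hclosed t ht c (mem_range.1 (mem_of_mem_erase hc)))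
    rwa [card_erase_of_mem (mem_range.2 hc₀), card_range, nsmul_eq_mul,
      Nat.cast_sub (by omega), Nat.cast_one] at this
  rw [hP, ← add_sum_erase _ _ (mem_range.2 hc₀), ← hmax, le_div_iff₀ hN]
  field_simp
  linarith

theorem sup'_sub_inf'_le_of_average (hT : T.Nonempty) (hN : 0 < N)
    (hclosed : ∀ t ∈ T, ∀ c < N, t - w c ∈ T)
    (hreach : ∀ t ∈ T, ∀ u ∈ T, ∃ c < N, t - w c = u)
    (hP : ∀ i t, P (i + 1) t = (∑ c ∈ range N, P i (t - w c)) / N) (i : ℕ) :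
    T.sup' hT (P i) - T.inf' hT (P i) ≤
      (1 - 1 / N) ^ i * (T.sup' hT (P 0) - T.inf' hT (P 0)) := by
  have hρ : 0 ≤ 1 - 1 / (N : ℝ) :=
    sub_nonneg.2 (div_le_one_of_le₀ (by exact_mod_cast hN) (Nat.cast_nonneg N))
  induction i with
  | zero => simp
  | succ i ih =>
    have hsup := sup'_succ_le_of_average hT hN hclosed hP i
    have hinf := le_inf'_succ_of_average hT hclosed hreach hP i
    calc T.sup' hT (P (i + 1)) - T.inf' hT (P (i + 1))
        ≤ (1 - 1 / N) * (T.sup' hT (P i) - T.inf' hT (P i)) := by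
          rw [one_sub_mul, one_div_mul_eq_div]
          linarith
      _ ≤ (1 - 1 / N) * ((1 - 1 / N) ^ i * (T.sup' hT (P 0) - T.inf' hT (P 0))) :=
          mul_le_mul_of_nonneg_left ih hρ
      _ = _ := by ring

theorem tendsto_mean_of_average (hclosed : ∀ t ∈ T, ∀ c < N, t - w c ∈ T)
    (hreach : ∀ t ∈ T, ∀ u ∈ T, ∃ c < N, t - w c = u)
    (hP : ∀ i t, P (i + 1) t = (∑ c ∈ range N, P i (t - w c)) / N) {t : G} (ht : t ∈ T) :
    Tendsto (fun i => P i t) atTop (𝓝 ((∑ u ∈ T, P 0 u) / #T)) := by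
  have hT : T.Nonempty := ⟨t, ht⟩
  have hN : 0 < N := by obtain ⟨c, hc, -⟩ := hreach t ht t ht; omega
  have hsum : ∀ i, ∑ u ∈ T, P i u = ∑ u ∈ T, P 0 u := by
    intro i
    induction i with
    | zero => rfl
    | succ i ih => rw [sum_succ_eq_sum_of_average hN.ne' hclosed hP, ih]
  have hcard : (0 : ℝ) < #T := by exact_mod_cast hT.card_pos
  have hbound : ∀ i, ‖P i t - (∑ u ∈ T, P 0 u) / #T‖ ≤
      (1 - 1 / N) ^ i * (T.sup' hT (P 0) - T.inf' hT (P 0)) := by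
    intro i
    have hmean_lo : T.inf' hT (P i) ≤ (∑ u ∈ T, P 0 u) / #T := by
      rw [le_div_iff₀ hcard, ← hsum i, mul_comm, ← nsmul_eq_mul]
      exact card_nsmul_le_sum _ _ _ fun u hu => inf'_le (P i) hu
    have hmean_hi : (∑ u ∈ T, P 0 u) / #T ≤ T.sup' hT (P i) := by
      rw [div_le_iff₀ hcard, ← hsum i, mul_comm, ← nsmul_eq_mul]
      exact sum_le_card_nsmul _ _ _ fun u hu => le_sup' (P i) hu
    have := inf'_le (P i) ht
    have := le_sup' (P i) ht
    rw [Real.norm_eq_abs, abs_le]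
    constructor <;> linarith [sup'_sub_inf'_le_of_average hT hN hclosed hreach hP i]
  have hρ0 : 0 ≤ 1 - 1 / (N : ℝ) :=
    sub_nonneg.2 (div_le_one_of_le₀ (by exact_mod_cast hN) (Nat.cast_nonneg N))
  have hρ1 : 1 - 1 / (N : ℝ) < 1 := sub_lt_self 1 (by positivity)
  rw [tendsto_iff_norm_sub_tendsto_zero]
  exact squeeze_zero (fun _ => norm_nonneg _) hbound (by
    simpa using (tendsto_pow_atTop_nhds_zero_of_lt_one hρ0 hρ1).mul_const
      (T.sup' hT (P 0) - T.inf' hT (P 0)))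

end Averaging

section DigitRule

variable {R : Type*} [Ring R] {f : ℕ → R} {e : R} {S : ℕ}

theorem card_filter_range_mul_eq_sum [DecidableEq R] {K : ℕ}
    (hf : ∀ m, ∀ r < K, f (K * m + r) = e * f m + f r) (m₀ : ℕ) (t : R) :
    #{n ∈ range (m₀ * K) | f n = t} =
      ∑ m ∈ range m₀, #{r ∈ range K | f r = t - e * f m} := by
  simp only [card_filter]
  rw [sum_range_mul_eq_sum_sum]
  refine sum_congr rfl fun m _ => sum_congr rfl fun r hr => ?_
  simp only [hf m r (mem_range.1 hr), eq_sub_iff_add_eq']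

theorem apply_pow_mul_add_of_isIdempotentElem (he : IsIdempotentElem e) (hf0 : f 0 = 0)
    (hf : ∀ m, ∀ r < S, f (S * m + r) = e * f m + f r) {M : ℕ} (hM : M ≠ 0) :
    ∀ m, ∀ r < S ^ M, f (S ^ M * m + r) = e * f m + f r := by
  simpa only [he.pow_eq hM] using apply_pow_mul_add_of_apply_mul_add hf0 hf M

theorem exists_lt_mul_apply_eq_sub [Finite R] (he : IsIdempotentElem e) (hf0 : f 0 = 0)
    (hf : ∀ m, ∀ r < S, f (S * m + r) = e * f m + f r)
    (hcover : ∀ m, ∃ c < S, e * f c = e * f m) (m m' : ℕ) :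
    ∃ c < S, e * f c = e * f m - e * f m' := by
  let E : AddSubmonoid R :=
    { carrier := Set.range fun n => e * f n
      zero_mem' := ⟨0, by simp [hf0]⟩
      add_mem' := by
        rintro _ _ ⟨n, rfl⟩ ⟨n', rfl⟩
        obtain ⟨c, hc, hce⟩ := hcover n
        refine ⟨S * n' + c, ?_⟩
        dsimp only
        rw [hf _ _ hc, mul_add, ← mul_assoc, he.eq, hce, add_comm] }
  have hneg : -(e * f m') ∈ E := by
    obtain ⟨j, hj⟩ := (isOfFinAddOrder_of_finite (e * f m')).mem_multiples_iff_mem_zmultiples.2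
      (neg_mem (AddSubgroup.mem_zmultiples _))
    exact hj ▸ E.nsmul_mem ⟨m', rfl⟩ j
  obtain ⟨n, hn⟩ := E.add_mem ⟨m, rfl⟩ hneg
  obtain ⟨c, hc, hce⟩ := hcover n
  exact ⟨c, hc, hce.trans (hn.trans (sub_eq_add_neg _ _).symm)⟩

theorem abs_card_filter_mul_sub_le [DecidableEq R] {K : ℕ} (hK : K ≠ 0)
    (hf : ∀ m, ∀ r < K, f (K * m + r) = e * f m + f r) {t : R} {Λ ε : ℝ}
    (hfreq : ∀ m, |(#{r ∈ range K | f r = t - e * f m} : ℝ) / K - Λ| ≤ ε) (m₀ : ℕ) :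
    |(#{n ∈ range (m₀ * K) | f n = t} : ℝ) - Λ * (m₀ * K)| ≤ ε * (m₀ * K) := by
  have hKpos : (0 : ℝ) < K := by exact_mod_cast Nat.pos_of_ne_zero hK
  have hblock (m : ℕ) : |(#{r ∈ range K | f r = t - e * f m} : ℝ) - Λ * K| ≤ ε * K := by
    rw [← div_mul_cancel₀ (#{r ∈ range K | f r = t - e * f m} : ℝ) hKpos.ne', ← sub_mul,
      abs_mul, abs_of_pos hKpos]
    exact mul_le_mul_of_nonneg_right (hfreq m) hKpos.le
  rw [card_filter_range_mul_eq_sum hf, Nat.cast_sum]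
  calc |∑ m ∈ range m₀, (#{r ∈ range K | f r = t - e * f m} : ℝ) - Λ * (m₀ * K)|
      = |∑ m ∈ range m₀, ((#{r ∈ range K | f r = t - e * f m} : ℝ) - Λ * K)| := by
        rw [sum_sub_distrib, sum_const, card_range, nsmul_eq_mul, mul_left_comm]
    _ ≤ ∑ m ∈ range m₀, ε * K :=
        (abs_sum_le_sum_abs _ _).trans (sum_le_sum fun m _ => hblock m)
    _ = ε * (m₀ * K) := by rw [sum_const, card_range, nsmul_eq_mul, mul_left_comm]

theorem card_filter_range_pow_succ_div [DecidableEq R] (he : IsIdempotentElem e) (hf0 : f 0 = 0)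
    (hf : ∀ m, ∀ r < S, f (S * m + r) = e * f m + f r) {M : ℕ} (hM : M ≠ 0) (t : R) :
    (#{r ∈ range (S ^ (M + 1)) | f r = t} : ℝ) / S ^ (M + 1) =
      (∑ c ∈ range S, (#{r ∈ range (S ^ M) | f r = t - e * f c} : ℝ) / S ^ M) / S := by
  rw [pow_succ' S M,
    card_filter_range_mul_eq_sum (apply_pow_mul_add_of_isIdempotentElem he hf0 hf hM),
    Nat.cast_sum, ← sum_div, div_div, ← pow_succ]

theorem exists_pos_tendsto_density_of_cover [Finite R] [DecidableEq R] (he : IsIdempotentElem e)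
    (hf0 : f 0 = 0) (hf : ∀ m, ∀ r < S, f (S * m + r) = e * f m + f r)
    (hcover : ∀ m, ∃ c < S, e * f c = e * f m) :
    ∃ Λ > 0,
      Tendsto (fun N : ℕ => (#{n ∈ range N | f n = 0} : ℝ) / N) atTop (𝓝 Λ) := by
  have hS : 0 < S := by obtain ⟨c, hc, -⟩ := hcover 0; omega
  set T := (range S).image fun c => e * f c
  have h0T : (0 : R) ∈ T := mem_image.2 ⟨0, mem_range.2 hS, by simp [hf0]⟩
  have hclosed : ∀ t ∈ T, ∀ m, t - e * f m ∈ T := by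
    rintro _ ht m
    obtain ⟨c, -, rfl⟩ := mem_image.1 ht
    obtain ⟨c', hc', hc'e⟩ := exists_lt_mul_apply_eq_sub he hf0 hf hcover c m
    exact mem_image.2 ⟨c', mem_range.2 hc', hc'e⟩
  have hreach : ∀ t ∈ T, ∀ u ∈ T, ∃ c < S, t - e * f c = u := by
    rintro _ ht _ hu
    obtain ⟨c, -, rfl⟩ := mem_image.1 ht
    obtain ⟨c', -, rfl⟩ := mem_image.1 hu
    obtain ⟨c'', hc'', hce⟩ := exists_lt_mul_apply_eq_sub he hf0 hf hcover c c'
    exact ⟨c'', hc'', by rw [hce, sub_sub_cancel]⟩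
  set P : ℕ → R → ℝ := fun i t =>
    (#{r ∈ range (S ^ (i + 1)) | f r = t} : ℝ) / S ^ (i + 1)
  have hconv := fun t (ht : t ∈ T) =>
    tendsto_mean_of_average (P := P) (fun t ht c _ => hclosed t ht c)
    hreach (fun i t => card_filter_range_pow_succ_div he hf0 hf i.succ_ne_zero t) ht
  set Λ := (∑ u ∈ T, P 0 u) / #T
  have hΛ : 0 < Λ := by
    refine div_pos (sum_pos' (fun u _ => by positivity) ⟨0, h0T, div_pos ?_ (by positivity)⟩)
      (by exact_mod_cast card_pos.2 ⟨0, h0T⟩)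
    exact_mod_cast card_pos.2 ⟨0, mem_filter.2 ⟨mem_range.2 (by simpa using hS), hf0⟩⟩
  refine ⟨Λ, hΛ, tendsto_div_of_abs_sub_mul_le (fun N N' h => ?_) fun ε hε => ?_⟩
  · exact_mod_cast card_le_card (filter_subset_filter _ (range_subset_range.2 h))
  obtain ⟨i, hi⟩ := ((eventually_all_finset T).2 fun t ht =>
    hconv t ht (Metric.closedBall_mem_nhds Λ hε)).exists
  refine ⟨S ^ (i + 1), pow_ne_zero _ hS.ne', fun m₀ => ?_⟩
  exact_mod_cast abs_card_filter_mul_sub_le (pow_ne_zero _ hS.ne')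
    (apply_pow_mul_add_of_isIdempotentElem he hf0 hf i.add_one_ne_zero)
    (fun m => by simpa [P, Real.dist_eq] using hi _ (hclosed 0 h0T m)) m₀

theorem exists_pos_tendsto_density [Finite R] [DecidableEq R] (he : IsIdempotentElem e)
    (hS : 1 < S) (hf0 : f 0 = 0) (hf : ∀ m, ∀ r < S, f (S * m + r) = e * f m + f r) :
    ∃ Λ > 0,
      Tendsto (fun N : ℕ => (#{n ∈ range N | f n = 0} : ℝ) / N) atTop (𝓝 Λ) := by
  obtain ⟨J, hJ, hcover⟩ := exists_lt_pow_apply_eq (fun n => e * f n) hS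
  exact exists_pos_tendsto_density_of_cover he hf0
    (apply_pow_mul_add_of_isIdempotentElem he hf0 hf hJ) hcover

end DigitRule

def integerCantorSet (b : ℕ) (D : Finset ℕ) : Set ℕ :=
  {m | ∀ d ∈ Nat.digits b m, d ∈ D}

section IntegerCantorSet

variable {b : ℕ} {D : Finset ℕ}

theorem zero_mem_integerCantorSet : 0 ∈ integerCantorSet b D := by
  simp [integerCantorSet]

theorem mem_integerCantorSet_iff (hb : 1 < b) (h0 : 0 ∈ D) {m : ℕ} :
    m ∈ integerCantorSet b D ↔ m % b ∈ D ∧ m / b ∈ integerCantorSet b D := by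
  rcases Nat.eq_zero_or_pos m with rfl | hm
  · simp [h0, zero_mem_integerCantorSet]
  · simp [integerCantorSet, Nat.digits_def' hb hm]

theorem mul_add_mem_integerCantorSet_iff (hb : 1 < b) (h0 : 0 ∈ D) {x d : ℕ} (hd : d < b) :
    b * x + d ∈ integerCantorSet b D ↔ d ∈ D ∧ x ∈ integerCantorSet b D := by
  rw [mem_integerCantorSet_iff hb h0, Nat.mul_add_mod, Nat.mod_eq_of_lt hd,
    Nat.mul_add_div (by omega), Nat.div_eq_of_lt hd, add_zero]

theorem strictMono_mul_div_add_mod {s : ℕ} (hs : 0 < s) {u : ℕ → ℕ} {v : Fin s → ℕ}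
    (hu : StrictMono u) (hv : StrictMono v) (hvb : ∀ j, v j < b) :
    StrictMono fun n => b * u (n / s) + v ⟨n % s, Nat.mod_lt n hs⟩ := by
  intro n n' hn
  rcases (Nat.div_le_div_right (c := s) hn.le).lt_or_eq with hlt | heq
  · calc b * u (n / s) + v _ < b * (u (n / s) + 1) := by
          rw [mul_add_one]; exact Nat.add_lt_add_left (hvb _) _
      _ ≤ b * u (n' / s) := Nat.mul_le_mul_left _ (hu hlt)
      _ ≤ _ := Nat.le_add_right _ _
  · have hmod : n % s < n' % s := by
      have := Nat.div_add_mod n s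
      have := Nat.div_add_mod n' s
      rw [heq] at *
      omega
    simp only [heq]
    exact Nat.add_lt_add_left (hv (Fin.mk_lt_mk.2 hmod)) _

theorem StrictMono.apply_zero_eq_zero_of_range_eq_integerCantorSet {k : ℕ → ℕ}
    (hk : StrictMono k) (hkr : Set.range k = integerCantorSet b D) : k 0 = 0 := by
  obtain ⟨n, hn⟩ : 0 ∈ Set.range k := hkr ▸ zero_mem_integerCantorSet
  exact Nat.le_zero.1 ((hk.monotone n.zero_le).trans hn.le)

theorem StrictMono.apply_mul_add_of_range_eq_integerCantorSet (hb : 1 < b) (h0 : 0 ∈ D)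
    (hDb : ∀ d ∈ D, d < b) {k : ℕ → ℕ} (hk : StrictMono k)
    (hkr : Set.range k = integerCantorSet b D) :
    ∀ m, ∀ j < #D, k (#D * m + j) = b * k m + k j := by
  have hs : 0 < #D := card_pos.2 ⟨0, h0⟩
  set d := D.orderEmbOfFin rfl
  set g : ℕ → ℕ := fun n => b * k (n / #D) + d ⟨n % #D, Nat.mod_lt n hs⟩
  have hg : StrictMono g :=
    strictMono_mul_div_add_mod hs hk d.strictMono fun j => hDb _ (D.orderEmbOfFin_mem rfl j)
  have hgd : ∀ m (j : Fin #D), g (#D * m + j) = b * k m + d j := by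
    intro m j
    have hj : (⟨(#D * m + j) % #D, Nat.mod_lt _ hs⟩ : Fin #D) = j :=
      Fin.ext (by simp [Nat.mod_eq_of_lt j.isLt])
    simp only [g, hj, Nat.mul_add_div hs, Nat.div_eq_of_lt j.isLt, add_zero]
  have hrange : Set.range g = integerCantorSet b D := by
    ext m
    constructor
    · rintro ⟨n, rfl⟩
      exact (mul_add_mem_integerCantorSet_iff hb h0 (hDb _ (D.orderEmbOfFin_mem rfl _))).2
        ⟨D.orderEmbOfFin_mem rfl _, hkr ▸ ⟨_, rfl⟩⟩
    · intro hm
      rw [mem_integerCantorSet_iff hb h0] at hm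
      obtain ⟨x, hx⟩ : m / b ∈ Set.range k := hkr ▸ hm.2
      obtain ⟨j, hj⟩ : m % b ∈ Set.range d := by rw [D.range_orderEmbOfFin rfl]; exact hm.1
      exact ⟨#D * x + j, by rw [hgd, hx, hj, Nat.div_add_mod]⟩
  have hkg : ∀ n, k n = g n := congrFun ((hk.range_inj hg).1 (hkr.trans hrange.symm))
  have hkd : ∀ j : Fin #D, k j = d j := fun j => by
    simpa [hk.apply_zero_eq_zero_of_range_eq_integerCantorSet hkr] using
      (hkg _).trans (hgd 0 j)
  intro m j hj
  rw [hkg, hgd m ⟨j, hj⟩, ← hkd ⟨j, hj⟩]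

end IntegerCantorSet

theorem cantor_divisible_positive_density_general
    (b : ℕ) (hb : 3 ≤ b) (D : Finset ℕ) (hD : 2 ≤ D.card)
    (hDsub : ∀ d ∈ D, d < b) (h0 : 0 ∈ D)
    (k : ℕ → ℕ) (hk : StrictMono k)
    (hkr : Set.range k = {m : ℕ | ∀ d ∈ Nat.digits b m, d ∈ D})
    (q : ℕ) (hq : 1 ≤ q) :
    ∃ L : ℝ, 0 < L ∧ Filter.Tendsto
      (fun N => (((Finset.range N).filter (fun n => q ∣ k n)).card : ℝ) / (N : ℝ))
      Filter.atTop (nhds L) := by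
  have : NeZero q := ⟨by omega⟩
  set f : ℕ → ZMod q := fun n => k n
  have hf0 : f 0 = 0 := by simp [f, hk.apply_zero_eq_zero_of_range_eq_integerCantorSet hkr]
  have hstep : ∀ m, ∀ j < #D, f (#D * m + j) = b * f m + f j := fun m j hj => by
    simp [f, hk.apply_mul_add_of_range_eq_integerCantorSet (by omega) h0 hDsub hkr m j hj]
  obtain ⟨L, hL, he⟩ := exists_ne_zero_isIdempotentElem_pow (b : ZMod q)
  obtain ⟨Λ, hΛ, hlim⟩ := exists_pos_tendsto_density he (Nat.one_lt_pow hL (by omega)) hf0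
    (apply_pow_mul_add_of_apply_mul_add hf0 hstep L)
  refine ⟨Λ, hΛ, hlim.congr fun N => ?_⟩
  simp only [f, ZMod.natCast_eq_zero_iff]

/-- Let `(k_n)` enumerate the Cantor set `C_{b,D}` (with `0 ∈ D`) in
increasing order. For every `q ≥ 1`, the density of `{n < N : q ∣ k_n}` converges,
as `N → ∞`, to a strictly positive limit. -/
theorem cantor_divisible_positive_density
    (b : ℕ) (hb : 3 ≤ b) (D : Finset ℕ) (hD : 2 ≤ D.card) (hDb : D.card < b)
    (hDsub : ∀ d ∈ D, d < b) (h0 : 0 ∈ D)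
    (k : ℕ → ℕ) (hk : StrictMono k)
    (hkr : Set.range k = {m : ℕ | ∀ d ∈ Nat.digits b m, d ∈ D})
    (q : ℕ) (hq : 1 ≤ q) :
    ∃ L : ℝ, 0 < L ∧ Filter.Tendsto
      (fun N => (((Finset.range N).filter (fun n => q ∣ k n)).card : ℝ) / (N : ℝ))
      Filter.atTop (nhds L) :=
  cantor_divisible_positive_density_general b hb D hD hDsub h0 k hk hkr q hq
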